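/- If f, g ∈ ℂ[[x,y,ℏ]] are both Borel-analytic, then their normal-ordered product f ⋆ g = Σ_{k≥0} (ℏᵏ/k!) (∂_yᵏ f)(∂_xᵏ g) is Borel-analytic. In other words, the set 𝒬 of Borel-analytic formal series is a subalgebra of (ℂ[[x,y,ℏ]], ⋆). (Boutet de Monvel–Krée / Pham: 𝒬 is a subalgebra of the formal Heisenberg algebra.) -/

import Mathlib

open scoped Classical

noncomputable section

variable {σ : Type*} [DecidableEq σ]

/-- Build a multivariate formal power series from its coefficient function. -/
def ofCoeff (g : (σ →₀ ℕ) → ℂ) : MvPowerSeries σ ℂ := g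

/-- The total degree of a monomial exponent. -/
def degOf (d : σ →₀ ℕ) : ℕ := d.sum fun _ n => n

/-- A formal power series is convergent (has a positive polyradius of convergence) iff
its coefficients grow at most geometrically. -/
def IsConv (f : MvPowerSeries σ ℂ) : Prop :=
  ∃ C R : ℝ, 0 < R ∧ ∀ d : σ →₀ ℕ, ‖MvPowerSeries.coeff d f‖ ≤ C * R ^ degOf d

/-- The Borel transform with respect to the variable `h` (thought of as `ℏ`):
`Σ a_k ℏ^k ↦ Σ_{k ≥ 1} a_k ℏ^{k-1}/(k-1)!`, i.e. the coefficient of `ℏ^j` in `Bf` is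
`a_{j+1}/j!` (the other variables being spectators). -/
def hborel (h : σ) (f : MvPowerSeries σ ℂ) : MvPowerSeries σ ℂ :=
  ofCoeff fun d => (1 / (d h).factorial : ℂ) *
    MvPowerSeries.coeff (d + Finsupp.single h 1) f

/-- The `ℏ`-free part of a series: the sum of the monomials not involving `h`. -/
def hfree (h : σ) (f : MvPowerSeries σ ℂ) : MvPowerSeries σ ℂ :=
  ofCoeff fun d => if d h = 0 then MvPowerSeries.coeff d f else 0

/-- `f` is Borel-analytic (of Gevrey class) with respect to the variable `h`:
its `ℏ`-Borel transform and its `ℏ`-free part are convergent power series. -/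
def BorelAnalytic (h : σ) (f : MvPowerSeries σ ℂ) : Prop :=
  IsConv (hborel h f) ∧ IsConv (hfree h f)

/-- `f` depends only on the variables in `S`. -/
def DependsOnlyOn (f : MvPowerSeries σ ℂ) (S : Set σ) : Prop :=
  ∀ d : σ →₀ ℕ, (∃ i ∉ S, d i ≠ 0) → MvPowerSeries.coeff d f = 0

/-- The formal partial derivative `∂_i`. -/
def pdF (i : σ) (f : MvPowerSeries σ ℂ) : MvPowerSeries σ ℂ :=
  ofCoeff fun d => ((d i : ℕ) + 1 : ℂ) *
    MvPowerSeries.coeff (d + Finsupp.single i 1) f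

/-- The normal-ordered (total symbol) product of the Heisenberg algebra
`[a, a†] = ℏ`, with `x` the symbol of `a†`, `y` the symbol of `a` and `h` that of `ℏ`:
`f ⋆ g = Σ_k (ℏ^k/k!) (∂_y^k f)(∂_x^k g)`.  All remaining variables are central. -/
def nstar (x y h : σ) (f g : MvPowerSeries σ ℂ) : MvPowerSeries σ ℂ :=
  ofCoeff fun d => ∑ k ∈ Finset.range (d h + 1),
    (1 / k.factorial : ℂ) *
      MvPowerSeries.coeff (d - Finsupp.single h k) ((pdF y)^[k] f * (pdF x)^[k] g)

/-- Iterated `⋆`-powers: `f^{⋆0} = 1`, `f^{⋆(m+1)} = f ⋆ f^{⋆m}`. -/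
def nstarPow (x y h : σ) (f : MvPowerSeries σ ℂ) : ℕ → MvPowerSeries σ ℂ
  | 0 => 1
  | m + 1 => nstar x y h f (nstarPow x y h f m)

/-- The coefficient of `z^m` in `ψ` (a series in the central variables),
`z` being the variable `zv`. -/
def zslice (zv : σ) (ψ : MvPowerSeries σ ℂ) (m : ℕ) : MvPowerSeries σ ℂ :=
  ofCoeff fun d => if d zv = 0 then
    MvPowerSeries.coeff (d + Finsupp.single zv m) ψ else 0

/-- Substitution `ψ ∘ f = Σ_m α_m ⋆ f^{⋆m}` of an element `f` (with vanishing constant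
coefficient) into the series `ψ = Σ_m α_m z^m`, `z` being the variable `zv` and the
`α_m` series in the central variables. -/
def zsubst (x y h zv : σ) (ψ f : MvPowerSeries σ ℂ) : MvPowerSeries σ ℂ :=
  ofCoeff fun d => ∑' m : ℕ,
    MvPowerSeries.coeff d (nstar x y h (zslice zv ψ m) (nstarPow x y h f m))

end


/-!
Both halves of Borel-analyticity in `ℏ` amount to one Gevrey estimate
`‖a_d‖ ≤ C · (d_ℏ)! · R^|d|` on the coefficients. This estimate survives `∂_x^k` and `∂_y^k` at
the price of a factor `k!` (the derivative of `x^(n+k)` is `(n+k)!/n! ≤ 2^(n+k) k!` times `x^n`),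
and it is multiplicative because `i! j! ≤ (i+j)!`. In the `k`-th term of `f ⋆ g` one of the two
factors `k!` is cancelled by `1/k!`, the other is absorbed by the `k` powers of `ℏ` carried by the
term, since `k! (d_ℏ - k)! ≤ d_ℏ!`.
-/

open MvPowerSeries Finset Nat

section GevreyBound

variable {σ : Type*}

lemma degOf_eq_degree (d : σ →₀ ℕ) : degOf d = d.degree := rfl

@[simp]
lemma degOf_add (d e : σ →₀ ℕ) : degOf (d + e) = degOf d + degOf e := by
  simp [degOf_eq_degree]

@[simp]
lemma degOf_single (i : σ) (k : ℕ) : degOf (Finsupp.single i k) = k := by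
  simp [degOf_eq_degree]

lemma apply_le_degOf (d : σ →₀ ℕ) (i : σ) : d i ≤ degOf d := Finsupp.le_degree i d

lemma descFactorial_add_le_two_pow_mul_factorial (n k : ℕ) :
    (n + k).descFactorial k ≤ 2 ^ (n + k) * k ! := by
  rw [descFactorial_eq_factorial_mul_choose, mul_comm]
  exact Nat.mul_le_mul_right _ (choose_le_two_pow _ _)

lemma factorial_mul_factorial_le_factorial_add (i j : ℕ) : i ! * j ! ≤ (i + j)! :=
  Nat.le_of_dvd (factorial_pos _) (factorial_mul_factorial_dvd_factorial_add i j)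

lemma card_antidiagonal_le_two_pow (m : σ →₀ ℕ) : #(antidiagonal m) ≤ 2 ^ degOf m := by
  have hmaps : ∀ p ∈ antidiagonal m, p.1 ∈ Iic m := fun p hp =>
    mem_Iic.2 (HasAntidiagonal.mem_antidiagonal.1 hp ▸ le_self_add)
  have hinj : Set.InjOn Prod.fst (antidiagonal m : Set ((σ →₀ ℕ) × (σ →₀ ℕ))) :=
    fun p hp q hq hpq => by
      rw [mem_coe, HasAntidiagonal.mem_antidiagonal] at hp hq
      exact Prod.ext hpq (add_left_cancel ((hp.trans hq.symm).trans (by rw [hpq])))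
  calc #(antidiagonal m) ≤ #(Iic m) := card_le_card_of_injOn Prod.fst hmaps hinj
    _ = ∏ i ∈ m.support, (m i + 1) := by simp [Finsupp.card_Iic]
    _ ≤ ∏ i ∈ m.support, 2 ^ m i := prod_le_prod' fun i _ => Nat.lt_two_pow_self
    _ = 2 ^ degOf m := by rw [prod_pow_eq_pow_sum]; rfl

lemma coeff_pdF (i : σ) (f : MvPowerSeries σ ℂ) (d : σ →₀ ℕ) :
    coeff d (pdF i f) = ((d i : ℂ) + 1) * coeff (d + Finsupp.single i 1) f := rfl

lemma coeff_iterate_pdF (i : σ) (k : ℕ) (f : MvPowerSeries σ ℂ) (d : σ →₀ ℕ) :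
    coeff d ((pdF i)^[k] f) =
      ((d i + k).descFactorial k : ℂ) * coeff (d + Finsupp.single i k) f := by
  induction k generalizing f with
  | zero => simp
  | succ k ih =>
    rw [Function.iterate_succ_apply, ih, coeff_pdF, add_assoc d, Finsupp.single_add,
      ← add_assoc (d i), succ_descFactorial_succ]
    simp only [Finsupp.add_apply, Finsupp.single_eq_same]
    push_cast
    ring

def GevreyBound (h : σ) (C R : ℝ) (f : MvPowerSeries σ ℂ) : Prop :=
  ∀ d, ‖coeff d f‖ ≤ C * (d h)! * R ^ degOf d

variable {h : σ} {C R : ℝ} {f : MvPowerSeries σ ℂ}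

lemma GevreyBound.nonneg (hf : GevreyBound h C R f) : 0 ≤ C := by
  simpa [degOf_eq_degree] using (norm_nonneg _).trans (hf 0)

lemma GevreyBound.mono_right {R' : ℝ} (hf : GevreyBound h C R f) (hR : 0 ≤ R) (hRR' : R ≤ R') :
    GevreyBound h C R' f := fun d =>
  (hf d).trans (mul_le_mul_of_nonneg_left (pow_le_pow_left₀ hR hRR' _)
    (mul_nonneg hf.nonneg (Nat.cast_nonneg _)))

lemma GevreyBound.iterate_pdF (hf : GevreyBound h C R f) {i : σ} (hih : i ≠ h) (k : ℕ) :
    GevreyBound h (k ! * C * (2 * R) ^ k) (2 * R) ((pdF i)^[k] f) := fun d => by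
  have hdesc : ((d i + k).descFactorial k : ℝ) ≤ 2 ^ (degOf d + k) * k ! := by
    have hpow : 2 ^ (d i + k) ≤ 2 ^ (degOf d + k) :=
      Nat.pow_le_pow_right two_pos (by have := apply_le_degOf d i; omega)
    exact_mod_cast (descFactorial_add_le_two_pow_mul_factorial _ _).trans
      (Nat.mul_le_mul_right _ hpow)
  have hfd := hf (d + Finsupp.single i k)
  simp only [Finsupp.add_apply, Finsupp.single_eq_of_ne hih.symm, add_zero, degOf_add,
    degOf_single] at hfd
  rw [coeff_iterate_pdF, norm_mul, Complex.norm_natCast]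
  calc ((d i + k).descFactorial k : ℝ) * ‖coeff (d + Finsupp.single i k) f‖
      ≤ (2 ^ (degOf d + k) * k !) * (C * (d h)! * R ^ (degOf d + k)) := by gcongr
    _ = k ! * C * (2 * R) ^ k * (d h)! * (2 * R) ^ degOf d := by ring

lemma GevreyBound.mul {A B S : ℝ} {F G : MvPowerSeries σ ℂ} (hF : GevreyBound h A S F)
    (hG : GevreyBound h B S G) (hS : 0 ≤ S) : GevreyBound h (A * B) (2 * S) (F * G) := by
  intro m
  have hAB : 0 ≤ A * B := mul_nonneg hF.nonneg hG.nonneg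
  have hterm : ∀ p ∈ antidiagonal m,
      ‖coeff p.1 F * coeff p.2 G‖ ≤ A * B * (m h)! * S ^ degOf m := by
    intro p hp
    rw [HasAntidiagonal.mem_antidiagonal] at hp
    have hfac : ((p.1 h)! * (p.2 h)! : ℝ) ≤ (m h)! := by
      rw [← hp, Finsupp.add_apply]
      exact_mod_cast factorial_mul_factorial_le_factorial_add _ _
    calc ‖coeff p.1 F * coeff p.2 G‖
        ≤ (A * (p.1 h)! * S ^ degOf p.1) * (B * (p.2 h)! * S ^ degOf p.2) := by
          rw [norm_mul]
          exact mul_le_mul (hF _) (hG _) (norm_nonneg _) ((norm_nonneg _).trans (hF _))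
      _ = A * B * ((p.1 h)! * (p.2 h)!) * S ^ degOf m := by rw [← hp, degOf_add]; ring
      _ ≤ A * B * (m h)! * S ^ degOf m := by gcongr
  have hcard : (#(antidiagonal m) : ℝ) ≤ 2 ^ degOf m := by
    exact_mod_cast card_antidiagonal_le_two_pow m
  calc ‖coeff m (F * G)‖ ≤ ∑ p ∈ antidiagonal m, ‖coeff p.1 F * coeff p.2 G‖ := by
        rw [coeff_mul]; exact norm_sum_le _ _
    _ ≤ #(antidiagonal m) * (A * B * (m h)! * S ^ degOf m) := by
        rw [← nsmul_eq_mul]; exact sum_le_card_nsmul _ _ _ hterm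
    _ ≤ 2 ^ degOf m * (A * B * (m h)! * S ^ degOf m) := by gcongr
    _ = A * B * (m h)! * (2 * S) ^ degOf m := by ring

end GevreyBound

section Star

variable {σ : Type*} {x y h : σ} {Cf Cg R : ℝ} {f g : MvPowerSeries σ ℂ}

lemma coeff_nstar (d : σ →₀ ℕ) : coeff d (nstar x y h f g) = ∑ k ∈ range (d h + 1),
    (1 / k ! : ℂ) * coeff (d - Finsupp.single h k) ((pdF y)^[k] f * (pdF x)^[k] g) := rfl

lemma GevreyBound.norm_nstar_term_le (hf : GevreyBound h Cf R f) (hg : GevreyBound h Cg R g)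
    (hxh : x ≠ h) (hyh : y ≠ h) (hR : 1 ≤ R) {d : σ →₀ ℕ} {k : ℕ} (hk : k ≤ d h) :
    ‖(1 / k ! : ℂ) * coeff (d - Finsupp.single h k) ((pdF y)^[k] f * (pdF x)^[k] g)‖ ≤
      Cf * Cg * (d h)! * (8 * R ^ 2) ^ degOf d := by
  obtain ⟨m, rfl⟩ : ∃ m, d = m + Finsupp.single h k :=
    ⟨_, (tsub_add_cancel_of_le (Finsupp.single_le_iff.2 hk)).symm⟩
  have hCC : 0 ≤ Cf * Cg := mul_nonneg hf.nonneg hg.nonneg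
  have hprod := (hf.iterate_pdF hyh k).mul (hg.iterate_pdF hxh k) (by positivity) m
  have hfac : (k ! * (m h)! : ℝ) ≤ (m h + k)! := by
    rw [add_comm]; exact_mod_cast factorial_mul_factorial_le_factorial_add _ _
  have hkpos : (0 : ℝ) < k ! := by positivity
  simp only [add_tsub_cancel_right, Finsupp.add_apply, Finsupp.single_eq_same, degOf_add,
    degOf_single]
  rw [norm_mul, norm_div, norm_one, Complex.norm_natCast]
  calc 1 / (k ! : ℝ) * ‖coeff m ((pdF y)^[k] f * (pdF x)^[k] g)‖
      ≤ 1 / k ! * (k ! * Cf * (2 * R) ^ k * (k ! * Cg * (2 * R) ^ k) * (m h)! *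
          (2 * (2 * R)) ^ degOf m) := by gcongr
    _ = Cf * Cg * (k ! * (m h)!) * ((2 * R * (2 * R)) ^ k * (2 * (2 * R)) ^ degOf m) := by
        rw [mul_pow (2 * R)]; field_simp
    _ ≤ Cf * Cg * (m h + k)! * ((8 * R ^ 2) ^ k * (8 * R ^ 2) ^ degOf m) := by
        gcongr Cf * Cg * ?_ * (?_ ^ k * ?_ ^ degOf m) <;> nlinarith
    _ = Cf * Cg * (m h + k)! * (8 * R ^ 2) ^ (degOf m + k) := by ring

lemma GevreyBound.nstar (hf : GevreyBound h Cf R f) (hg : GevreyBound h Cg R g)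
    (hxh : x ≠ h) (hyh : y ≠ h) (hR : 1 ≤ R) :
    GevreyBound h (Cf * Cg) (16 * R ^ 2) (nstar x y h f g) := fun d => by
  have hCC : 0 ≤ Cf * Cg := mul_nonneg hf.nonneg hg.nonneg
  have hcard : ((d h + 1 : ℕ) : ℝ) ≤ 2 ^ degOf d := by
    exact_mod_cast (apply_le_degOf d h).trans_lt Nat.lt_two_pow_self
  rw [coeff_nstar]
  calc _
      ≤ ∑ k ∈ range (d h + 1), ‖(1 / k ! : ℂ) *
          coeff (d - Finsupp.single h k) ((pdF y)^[k] f * (pdF x)^[k] g)‖ :=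
        norm_sum_le _ _
    _ ≤ (d h + 1 : ℕ) * (Cf * Cg * (d h)! * (8 * R ^ 2) ^ degOf d) := by
        refine (sum_le_card_nsmul _ _ _ fun k hk => ?_).trans_eq
          (by rw [card_range, nsmul_eq_mul])
        exact hf.norm_nstar_term_le hg hxh hyh hR (Nat.lt_succ_iff.1 (mem_range.1 hk))
    _ ≤ 2 ^ degOf d * (Cf * Cg * (d h)! * (8 * R ^ 2) ^ degOf d) := by gcongr
    _ = Cf * Cg * (d h)! * (2 * (8 * R ^ 2)) ^ degOf d := by rw [mul_pow 2]; ring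
    _ = Cf * Cg * (d h)! * (16 * R ^ 2) ^ degOf d := by rw [← mul_assoc]; norm_num

end Star

section Borel

variable {σ : Type*} {h : σ} {f : MvPowerSeries σ ℂ}

lemma IsConv.exists_one_le (hf : IsConv f) :
    ∃ C R : ℝ, 1 ≤ R ∧ ∀ d, ‖coeff d f‖ ≤ C * R ^ degOf d := by
  obtain ⟨C, R, hR, hb⟩ := hf
  refine ⟨max C 0, max R 1, le_max_right _ _, fun d => (hb d).trans ?_⟩
  gcongr
  exacts [le_max_left _ _, le_max_left _ _]

lemma norm_coeff_add_single_eq (d : σ →₀ ℕ) :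
    ‖coeff (d + Finsupp.single h 1) f‖ = (d h)! * ‖coeff d (hborel h f)‖ := by
  have hb : coeff d (hborel h f) = (1 / (d h)! : ℂ) * coeff (d + Finsupp.single h 1) f := rfl
  have hpos : (0 : ℝ) < (d h)! := by positivity
  rw [hb, norm_mul, norm_div, norm_one, Complex.norm_natCast]
  field_simp

lemma BorelAnalytic.exists_gevreyBound (hf : BorelAnalytic h f) :
    ∃ C R : ℝ, 1 ≤ R ∧ GevreyBound h C R f := by
  obtain ⟨C₁, R₁, hR₁, hb₁⟩ := hf.1.exists_one_le
  obtain ⟨C₂, R₂, hR₂, hb₂⟩ := hf.2.exists_one_le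
  have hC₁ : 0 ≤ C₁ := by simpa [degOf_eq_degree] using (norm_nonneg _).trans (hb₁ 0)
  have hC₂ : 0 ≤ C₂ := by simpa [degOf_eq_degree] using (norm_nonneg _).trans (hb₂ 0)
  refine ⟨max C₁ C₂, max R₁ R₂, hR₁.trans (le_max_left _ _), fun d => ?_⟩
  by_cases hd : d h = 0
  · have hfree_eq : coeff d (hfree h f) = coeff d f := if_pos hd
    calc ‖coeff d f‖ ≤ C₂ * R₂ ^ degOf d := hfree_eq ▸ hb₂ d
      _ ≤ max C₁ C₂ * (d h)! * max R₁ R₂ ^ degOf d := by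
        rw [hd, factorial_zero, Nat.cast_one, mul_one]
        gcongr <;> first | positivity | exact le_max_right _ _
  · obtain ⟨e, rfl⟩ : ∃ e, d = e + Finsupp.single h 1 :=
      ⟨_, (tsub_add_cancel_of_le (Finsupp.single_le_iff.2 (Nat.one_le_iff_ne_zero.2 hd))).symm⟩
    simp only [Finsupp.add_apply, Finsupp.single_eq_same, degOf_add, degOf_single]
    rw [norm_coeff_add_single_eq]
    calc ((e h)! : ℝ) * ‖coeff e (hborel h f)‖ ≤ (e h)! * (C₁ * R₁ ^ degOf e) := by
          gcongr; exact hb₁ e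
      _ ≤ (e h + 1)! * (max C₁ C₂ * max R₁ R₂ ^ degOf e) := by
          gcongr
          exacts [Nat.le_succ _, le_max_left _ _, le_max_left _ _]
      _ ≤ (e h + 1)! * (max C₁ C₂ * max R₁ R₂ ^ (degOf e + 1)) := by
          gcongr
          exacts [hR₁.trans (le_max_left _ _), Nat.le_succ _]
      _ = max C₁ C₂ * (e h + 1)! * max R₁ R₂ ^ (degOf e + 1) := by ring

lemma GevreyBound.borelAnalytic {C R : ℝ} (hf : GevreyBound h C R f) (hR : 0 < R) :
    BorelAnalytic h f := by
  have hC := hf.nonneg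
  refine ⟨⟨C * R, 2 * R, by positivity, fun d => ?_⟩, ⟨C, R, hR, fun d => ?_⟩⟩
  · have hpos : (0 : ℝ) < (d h)! := by positivity
    have hdh : ((d h + 1 : ℕ) : ℝ) ≤ 2 ^ degOf d := by
      exact_mod_cast (apply_le_degOf d h).trans_lt Nat.lt_two_pow_self
    have hfd := hf (d + Finsupp.single h 1)
    simp only [Finsupp.add_apply, Finsupp.single_eq_same, degOf_add, degOf_single,
      factorial_succ, norm_coeff_add_single_eq] at hfd
    refine le_of_mul_le_mul_left (hfd.trans ?_) hpos
    calc C * ((d h + 1) * (d h)! : ℕ) * R ^ (degOf d + 1)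
        = (d h)! * (C * R * ((d h + 1 : ℕ) * R ^ degOf d)) := by push_cast; ring
      _ ≤ (d h)! * (C * R * (2 ^ degOf d * R ^ degOf d)) := by gcongr
      _ = (d h)! * (C * R * (2 * R) ^ degOf d) := by rw [mul_pow]
  · have hcoeff : coeff d (hfree h f) = if d h = 0 then coeff d f else 0 := rfl
    rw [hcoeff]
    split_ifs with hd
    · simpa [hd] using hf d
    · rw [norm_zero]; positivity

end Borel

/-- **Boutet de Monvel–Krée / Pham.**  On `ℂ[[x,y,ℏ]]` (variables `0 = x`, `1 = y`,
`2 = ℏ`) equipped with the normal-ordered product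
`f ⋆ g = Σ_k (ℏ^k/k!)(∂_y^k f)(∂_x^k g)` of the Heisenberg algebra `[a,a†] = ℏ`, the
`⋆`-product of two Borel-analytic series is Borel-analytic; that is, the set `𝒬` of
Borel-analytic formal series is a subalgebra of `(ℂ[[x,y,ℏ]], ⋆)`. -/
theorem borel_analytic_star_closed
    (f g : MvPowerSeries (Fin 3) ℂ)
    (hf : BorelAnalytic 2 f) (hg : BorelAnalytic 2 g) :
    BorelAnalytic 2 (nstar 0 1 2 f g) := by
  obtain ⟨Cf, Rf, hRf, hbf⟩ := hf.exists_gevreyBound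
  obtain ⟨Cg, Rg, hRg, hbg⟩ := hg.exists_gevreyBound
  have hR : 1 ≤ max Rf Rg := hRf.trans (le_max_left _ _)
  have hbf' := hbf.mono_right (by linarith) (le_max_left Rf Rg)
  have hbg' := hbg.mono_right (by linarith) (le_max_right Rf Rg)
  exact (hbf'.nstar hbg' (by decide) (by decide) hR).borelAnalytic (by positivity)
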